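/- arXiv:2601.09967 — 3 statements merged into one kernel-verified Lean document; each statement's English description precedes it below -/
import Mathlib

section
/- Let H be a real Hilbert space, P ⊆ H a closed subspace with orthogonal projection Π : H → P, (Ω, ℱ, ℙ) a probability space, and δ : H → L²(Ω, ℙ) a continuous linear operator with Hilbert space adjoint δ* : L²(Ω, ℙ) → H. Assume: (i) E[δ(u)] = 0 for all u ∈ H; (ii) E[|δ(u)|²] = ‖u‖²_H for all u ∈ P; (iii) every F̃ ∈ L²(Ω, ℙ) with E[F̃] = 0 can be written as F̃ = δ(v) for some v ∈ P. Then for every F ∈ L²(Ω, ℙ): F = E[F] + δ(Π(δ* F)) as elements of L²(Ω, ℙ). -/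
open MeasureTheory RealInnerProductSpace

/-- The constant random variable with value `c`, as an element of `L²(Ω, ℙ)`. -/
noncomputable def constL2 {Ω : Type*} [MeasurableSpace Ω] (μ : Measure Ω)
    [IsFiniteMeasure μ] (c : ℝ) : Lp ℝ 2 μ :=
  (memLp_const c).toLp (fun _ => c)

/-- **Operator factorization `(Id − E) = δ ∘ Π ∘ δ*`** (Theorem 3.6):
if `δ : H → L²(Ω, ℙ)` is a continuous linear operator which is centered,
isometric on a closed subspace `P` (the predictable processes), and every
centered element of `L²` is represented as `δ(v)` with `v ∈ P`, then every
`F ∈ L²(Ω, ℙ)` factorizes as `F = E[F] + δ(Π(δ* F))`, where `Π` is the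
orthogonal projection onto `P`. -/
theorem stmt_2
    {H : Type*} [NormedAddCommGroup H] [InnerProductSpace ℝ H] [CompleteSpace H]
    {Ω : Type*} [MeasurableSpace Ω] (μ : Measure Ω) [IsProbabilityMeasure μ]
    (P : Submodule ℝ H) [CompleteSpace P]
    (δ : H →L[ℝ] Lp ℝ 2 μ)
    (hcent : ∀ u : H, ∫ ω, (δ u) ω ∂μ = 0)
    (hiso : ∀ u ∈ P, ∫ ω, ((δ u) ω) ^ 2 ∂μ = ‖u‖ ^ 2)
    (hrep : ∀ G : Lp ℝ 2 μ, ∫ ω, G ω ∂μ = 0 → ∃ v ∈ P, δ v = G)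
    (F : Lp ℝ 2 μ) :
    F = constL2 μ (∫ ω, F ω ∂μ)
        + δ (Submodule.orthogonalProjection P (ContinuousLinearMap.adjoint δ F) : H) := by
  have hint : ∀ f : Lp ℝ 2 μ, Integrable (f : Ω → ℝ) μ := fun f =>
    (Lp.memLp f).integrable one_le_two
  set c := ∫ ω, F ω ∂μ with hc
  have hconst_coe : (constL2 μ c : Ω → ℝ) =ᵐ[μ] fun _ => c := MemLp.coeFn_toLp _
  have hconst_int : ∫ ω, (constL2 μ c) ω ∂μ = c := by
    rw [integral_congr_ae hconst_coe]; simp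
  -- the centered part of F
  have hG : ∫ ω, (F - constL2 μ c) ω ∂μ = 0 := by
    rw [integral_congr_ae (Lp.coeFn_sub F (constL2 μ c))]
    simp only [Pi.sub_apply]
    rw [integral_sub (hint F) (hint _), hconst_int, ← hc, sub_self]
  obtain ⟨v, hvP, hv⟩ := hrep _ hG
  -- inner products in L2
  have hinner : ∀ f g : Lp ℝ 2 μ, ⟪f, g⟫ = ∫ ω, f ω * g ω ∂μ := by
    intro f g
    rw [L2.inner_def]
    exact integral_congr_ae (Filter.Eventually.of_forall fun ω => by
      simp [RCLike.inner_apply, mul_comm])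
  -- δ preserves norms on P
  have hnorm : ∀ u ∈ P, ‖δ u‖ = ‖u‖ := by
    intro u hu
    have h1 : ⟪δ u, δ u⟫ = ‖u‖ ^ 2 := by
      rw [hinner, ← hiso u hu]
      exact integral_congr_ae (Filter.Eventually.of_forall fun ω => (sq _).symm)
    have h2 : ‖δ u‖ ^ 2 = ‖u‖ ^ 2 := by
      rw [← h1, real_inner_self_eq_norm_sq]
    nlinarith [norm_nonneg (δ u), norm_nonneg u, sq_nonneg (‖δ u‖ - ‖u‖), sq_nonneg (‖δ u‖ + ‖u‖)]
  -- δ preserves inner products on P (polarization)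
  have hinnerP : ∀ u ∈ P, ∀ w ∈ P, ⟪δ u, δ w⟫ = ⟪u, w⟫ := by
    intro u hu w hw
    rw [real_inner_eq_norm_add_mul_self_sub_norm_mul_self_sub_norm_mul_self_div_two (δ u) (δ w),
      real_inner_eq_norm_add_mul_self_sub_norm_mul_self_sub_norm_mul_self_div_two u w,
      ← map_add, hnorm u hu, hnorm w hw, hnorm (u + w) (P.add_mem hu hw)]
  -- constants are orthogonal to the range of δ
  have hconst_orth : ∀ u : H, ⟪constL2 μ c, δ u⟫ = 0 := by
    intro u
    rw [hinner]
    have : ∫ ω, (constL2 μ c) ω * (δ u) ω ∂μ = ∫ ω, c * (δ u) ω ∂μ :=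
      integral_congr_ae (hconst_coe.mono fun ω h => by dsimp only; rw [h])
    rw [this, integral_const_mul, hcent u, mul_zero]
  -- the projection of δ* F is v
  have hproj : (Submodule.orthogonalProjection P (ContinuousLinearMap.adjoint δ F) : H) = v := by
    apply Submodule.eq_starProjection_of_mem_of_inner_eq_zero hvP
    intro w hw
    rw [inner_sub_left, ContinuousLinearMap.adjoint_inner_left]
    have hF : F = (F - constL2 μ c) + constL2 μ c := by abel
    rw [hF, inner_add_left, ← hv, hinnerP v hvP w hw, hconst_orth w, add_zero, sub_self]
  rw [hproj, hv]
  abel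
end

section
/- Let H be a real Hilbert space, P ⊆ H a closed subspace with orthogonal projection Π : H → P, (Ω, ℱ, ℙ) a probability space, and δ : H → L²(Ω, ℙ) a continuous linear operator with Hilbert space adjoint δ*. Assume: (i) E[δ(u)] = 0 for all u ∈ H; (ii) E[|δ(u)|²] = ‖u‖²_H for all u ∈ P. If F ∈ L²(Ω, ℙ) and v ∈ P satisfy δ(v) = F − E[F] (as elements of L²), then Π(δ* F) = v. -/
open MeasureTheory RealInnerProductSpace

lemma inner_constL2 {Ω : Type*} [MeasurableSpace Ω] (μ : Measure Ω)
    [IsFiniteMeasure μ] (c : ℝ) (g : Lp ℝ 2 μ) :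
    ⟪constL2 μ c, g⟫ = c * ∫ ω, g ω ∂μ := by
  have h : ∀ᵐ a ∂μ, ⟪(constL2 μ c) a, g a⟫ = c * g a := by
    filter_upwards [(memLp_const c).coeFn_toLp (μ := μ)] with a ha
    rw [show ((constL2 μ c : Lp ℝ 2 μ) : Ω → ℝ) a = c from ha]
    simp [RCLike.inner_apply, mul_comm]
  rw [L2.inner_def, integral_congr_ae h, integral_const_mul]
  
/-- **The predictable projection of the adjoint derivative recovers the
representing integrand** (key step in the proof of Theorem 3.6): if
`δ : H → L²(Ω, ℙ)` is continuous linear, centered, and isometric on the closed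
subspace `P`, and if `v ∈ P` represents the fluctuation, `δ(v) = F − E[F]`,
then `Π(δ* F) = v`, where `Π` is the orthogonal projection onto `P`. -/
theorem stmt_3
    {H : Type*} [NormedAddCommGroup H] [InnerProductSpace ℝ H] [CompleteSpace H]
    {Ω : Type*} [MeasurableSpace Ω] (μ : Measure Ω) [IsProbabilityMeasure μ]
    (P : Submodule ℝ H) [CompleteSpace P]
    (δ : H →L[ℝ] Lp ℝ 2 μ)
    (hcent : ∀ u : H, ∫ ω, (δ u) ω ∂μ = 0)
    (hiso : ∀ u ∈ P, ∫ ω, ((δ u) ω) ^ 2 ∂μ = ‖u‖ ^ 2)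
    (F : Lp ℝ 2 μ) (v : H) (hv : v ∈ P)
    (hrep : δ v = F - constL2 μ (∫ ω, F ω ∂μ)) :
    (Submodule.orthogonalProjectionOnto P (ContinuousLinearMap.adjoint δ F) : H) = v := by
  -- norms are preserved on P
  have hnorm : ∀ u ∈ P, ‖δ u‖ = ‖u‖ := by
    intro u hu
    have h1 : ‖δ u‖ ^ 2 = ‖u‖ ^ 2 := by
      rw [← hiso u hu, ← real_inner_self_eq_norm_sq, L2.inner_def]
      exact integral_congr_ae (Filter.Eventually.of_forall fun a => by simp [RCLike.inner_apply, sq])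
    have := (sq_eq_sq_iff_abs_eq_abs _ _).mp h1
    rwa [abs_of_nonneg (norm_nonneg _), abs_of_nonneg (norm_nonneg _)] at this
  -- inner products preserved on P (polarization)
  have hinner : ∀ u ∈ P, ∀ w ∈ P, ⟪δ u, δ w⟫ = ⟪u, w⟫ := by
    intro u hu w hw
    have h1 := hnorm u hu
    have h2 := hnorm w hw
    have h3 : ‖δ (u + w)‖ = ‖u + w‖ := hnorm _ (P.add_mem hu hw)
    rw [map_add] at h3
    have e1 := real_inner_eq_norm_add_mul_self_sub_norm_mul_self_sub_norm_mul_self_div_two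
      (δ u) (δ w)
    have e2 := real_inner_eq_norm_add_mul_self_sub_norm_mul_self_sub_norm_mul_self_div_two u w
    rw [e1, e2, h1, h2, h3]
  apply Submodule.eq_starProjection_of_mem_of_inner_eq_zero hv
  intro w hw
  rw [inner_sub_left, ContinuousLinearMap.adjoint_inner_left]
  have : ⟪F, δ w⟫ = ⟪v, w⟫ := by
    have : ⟪δ v, δ w⟫ = ⟪F, δ w⟫ - ⟪constL2 μ (∫ ω, F ω ∂μ), δ w⟫ := by
      rw [hrep, inner_sub_left]
    rw [hinner v hv w hw, inner_constL2, hcent w, mul_zero, sub_zero] at this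
    linarith
  rw [this, sub_self]
end

section
/- Under the hypotheses of the operator factorization theorem — H a real Hilbert space, P ⊆ H a closed subspace with orthogonal projection Π, (Ω, ℱ, ℙ) a probability space, δ : H → L²(Ω, ℙ) a continuous linear operator with adjoint δ* such that (i) E[δ(u)] = 0 for all u ∈ H, (ii) E[|δ(u)|²] = ‖u‖²_H for all u ∈ P, and (iii) every centered element of L²(Ω, ℙ) equals δ(v) for some v ∈ P — one has the energy isometry: for every F ∈ L²(Ω, ℙ), ‖F − E[F]‖_{L²} = ‖Π(δ* F)‖_H. -/
open MeasureTheory RealInnerProductSpace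

/-- **Energy isometry**: under the hypotheses of the operator factorization
theorem (Theorem 3.6) — `δ` centered, isometric on the closed predictable
subspace `P`, and with the representation property — one has
`‖F − E[F]‖_{L²} = ‖Π(δ* F)‖_H` for every `F ∈ L²(Ω, ℙ)`. -/
theorem stmt_5
    {H : Type*} [NormedAddCommGroup H] [InnerProductSpace ℝ H] [CompleteSpace H]
    {Ω : Type*} [MeasurableSpace Ω] (μ : Measure Ω) [IsProbabilityMeasure μ]
    (P : Submodule ℝ H) [CompleteSpace P]
    (δ : H →L[ℝ] Lp ℝ 2 μ)
    (hcent : ∀ u : H, ∫ ω, (δ u) ω ∂μ = 0)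
    (hiso : ∀ u ∈ P, ∫ ω, ((δ u) ω) ^ 2 ∂μ = ‖u‖ ^ 2)
    (hrep : ∀ G : Lp ℝ 2 μ, ∫ ω, G ω ∂μ = 0 → ∃ v ∈ P, δ v = G)
    (F : Lp ℝ 2 μ) :
    ‖F - constL2 μ (∫ ω, F ω ∂μ)‖
      = ‖(Submodule.orthogonalProjectionOnto P (ContinuousLinearMap.adjoint δ F) : H)‖ := by
  set c := ∫ ω, F ω ∂μ with hc
  set G := F - constL2 μ c with hGdef
  have hconst : (constL2 μ c : Ω → ℝ) =ᵐ[μ] fun _ => c := MemLp.coeFn_toLp _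
  have hGfn : (G : Ω → ℝ) =ᵐ[μ] fun ω => F ω - c := by
    filter_upwards [Lp.coeFn_sub F (constL2 μ c), hconst] with ω h1 h2
    rw [hGdef, h1, Pi.sub_apply, h2]
  have hFint : Integrable (F : Ω → ℝ) μ :=
    (Lp.memLp F).integrable (by norm_num)
  have hGint0 : ∫ ω, G ω ∂μ = 0 := by
    rw [integral_congr_ae hGfn, integral_sub hFint (integrable_const c), integral_const]
    simp [hc]
  obtain ⟨v, hvP, hv⟩ := hrep G hGint0
  -- norm squared of an L2 element
  have hnormsq : ∀ K : Lp ℝ 2 μ, ∫ ω, (K ω) ^ 2 ∂μ = ‖K‖ ^ 2 := by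
    intro K
    have h1 : ⟪K, K⟫ = ∫ ω, (K ω) * (K ω) ∂μ := L2.inner_def K K
    rw [real_inner_self_eq_norm_sq] at h1
    simp_rw [← sq] at h1
    exact h1.symm
  have hδnorm : ∀ u ∈ P, ‖δ u‖ = ‖u‖ := by
    intro u hu
    have := hiso u hu
    rw [hnormsq] at this
    have h0 : (0:ℝ) ≤ ‖δ u‖ := norm_nonneg _
    nlinarith [norm_nonneg u]
  have hδinner : ∀ u ∈ P, ∀ w ∈ P, ⟪δ u, δ w⟫ = ⟪u, w⟫ := by
    intro u hu w hw
    have h1 := real_inner_eq_norm_add_mul_self_sub_norm_mul_self_sub_norm_mul_self_div_two (δ u) (δ w)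
    have h2 := real_inner_eq_norm_add_mul_self_sub_norm_mul_self_sub_norm_mul_self_div_two u w
    rw [← map_add] at h1
    rw [h1, h2, hδnorm u hu, hδnorm w hw, hδnorm _ (P.add_mem hu hw)]
  -- constant is orthogonal to each δ u
  have hconstinner : ∀ u : H, ⟪constL2 μ c, δ u⟫ = 0 := by
    intro u
    have h1 : ⟪constL2 μ c, δ u⟫ = ∫ ω, (constL2 μ c) ω * (δ u) ω ∂μ := by
      rw [L2.inner_def]; simp only [Real.inner_apply]
    have h2 : ∫ ω, (constL2 μ c) ω * (δ u) ω ∂μ = ∫ ω, c * (δ u) ω ∂μ := by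
      refine integral_congr_ae ?_
      filter_upwards [hconst] with ω h; rw [h]
    rw [h1, h2, integral_const_mul, hcent u, mul_zero]
  -- Π (δ* F) = v
  have hproj : (Submodule.orthogonalProjectionOnto P (ContinuousLinearMap.adjoint δ F) : H) = v := by
    apply Submodule.eq_starProjection_of_mem_of_inner_eq_zero hvP
    intro w hw
    rw [inner_sub_left, ContinuousLinearMap.adjoint_inner_left]
    have : ⟪F, δ w⟫ = ⟪G, δ w⟫ + ⟪constL2 μ c, δ w⟫ := by
      rw [← inner_add_left, hGdef]
      rw [sub_add_cancel]
    rw [this, hconstinner, add_zero, ← hv, hδinner v hvP w hw, sub_self]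
  rw [hproj]
  show ‖G‖ = ‖v‖
  have : ‖G‖ ^ 2 = ‖v‖ ^ 2 := by
    rw [← hnormsq, ← hv, hiso v hvP]
  have hnv : ‖(v:H)‖ = ‖v‖ := rfl
  nlinarith [norm_nonneg G, norm_nonneg v]
end
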